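/- Let I, J, K, R be positive integers. The set of triples (X, Y, Z) ∈ ℝ^{I×R} × ℝ^{J×R} × ℝ^{K×R} for which the iterated Khatri–Rao product Z ⊙ Y ⊙ X does not have rank equal to min(IJK, R) has Lebesgue measure zero. In other words, for generic X, Y, Z, rank(Z ⊙ Y ⊙ X) = min(IJK, R). -/

import Mathlib

/-!
Fix an `m × m` minor of `Z ⊙ Y ⊙ X` with `m = min (IJK) R`. Its determinant is a polynomial in
the entries of `X`, `Y`, `Z`. At `X i r = r ^ i`, `Y j r = r ^ (I j)`, `Z k r = r ^ (IJ k)` the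
row `(k, j, i)` of `Z ⊙ Y ⊙ X` is `r ↦ r ^ (i + I j + IJ k)`, so `Z ⊙ Y ⊙ X` is a row permutation
of the `IJK × R` Vandermonde matrix with nodes `0, …, R - 1`, and the minor is a nonzero
Vandermonde determinant. A nonzero real polynomial vanishes only on a Lebesgue-null set
(induction on the number of variables, using Fubini and the finiteness of the roots of a
one-variable polynomial), so almost everywhere the minor is nonzero and the rank attains its
upper bound `min (IJK) R`.
-/

/-- The Khatri–Rao (columnwise Kronecker) product: for `A : α × γ` and `B : β × γ`
matrices, `(khatriRao A B) (i, j) r = A i r * B j r`, i.e. the `r`-th column of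
`khatriRao A B` is the Kronecker product of the `r`-th columns of `A` and `B`. -/
def khatriRao {α β γ : Type*} (A : Matrix α γ ℝ) (B : Matrix β γ ℝ) :
    Matrix (α × β) γ ℝ :=
  Matrix.of fun p r => A p.1 r * B p.2 r

open MeasureTheory Measure Set MvPolynomial

theorem Polynomial.ae_eval_ne_zero {q : Polynomial ℝ} (hq : q ≠ 0) :
    ∀ᵐ y : ℝ, q.eval y ≠ 0 :=
  measure_eq_zero_iff_ae_notMem.1 ((Polynomial.finite_setOfPred_isRoot hq).measure_zero _)

namespace MvPolynomial

theorem ae_eval_ne_zero_of_equiv {α β : Type*} [Fintype α] [Fintype β] (e : α ≃ β)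
    (h : ∀ q : MvPolynomial α ℝ, q ≠ 0 → ∀ᵐ y : α → ℝ, eval y q ≠ 0)
    {p : MvPolynomial β ℝ} (hp : p ≠ 0) : ∀ᵐ x : β → ℝ, eval x p ≠ 0 := by
  have hren : rename e.symm p ≠ 0 := fun h0 =>
    hp (rename_injective _ e.symm.injective (by rw [h0, map_zero]))
  have hmp := volume_measurePreserving_piCongrLeft (fun _ : α => ℝ) e.symm
  filter_upwards [hmp.quasiMeasurePreserving.ae (h _ hren)] with x hx
  rw [eval_rename] at hx
  convert hx
  funext b
  exact (MeasurableEquiv.piCongrLeft_apply_apply (β := fun _ : α => ℝ) e.symm x b).symm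

theorem ae_eval_ne_zero_option {σ : Type*} [Fintype σ]
    (h : ∀ q : MvPolynomial σ ℝ, q ≠ 0 → ∀ᵐ s : σ → ℝ, eval s q ≠ 0)
    {p : MvPolynomial (Option σ) ℝ} (hp : p ≠ 0) : ∀ᵐ x : Option σ → ℝ, eval x p ≠ 0 := by
  set E := MeasurableEquiv.piOptionEquivProd (fun _ : Option σ => ℝ)
  have hE : MeasurePreserving E.symm (volume.prod volume) volume :=
    ⟨E.symm.measurable, pi_map_piOptionEquivProd (β := fun _ : Option σ => ℝ) fun _ => volume⟩
  set Q := optionEquivLeft ℝ σ p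
  have hQ : Q.leadingCoeff ≠ 0 := by
    simpa [Q, Polynomial.leadingCoeff_ne_zero] using hp
  have hslice : ∀ᵐ s : σ → ℝ, ∀ᵐ y : ℝ, eval (E.symm (s, y)) p ≠ 0 := by
    filter_upwards [h _ hQ] with s hs
    have hQs : Q.map (eval s) ≠ 0 := by
      rwa [← Polynomial.leadingCoeff_ne_zero,
        Polynomial.leadingCoeff_map_of_leadingCoeff_ne_zero _ hs]
    filter_upwards [Polynomial.ae_eval_ne_zero hQs] with y hy
    rw [← optionEquivLeft_elim_eval] at hy
    convert hy with o
    cases o <;> rfl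
  have hmeas : MeasurableSet {z : (σ → ℝ) × ℝ | eval (E.symm z) p ≠ 0} :=
    (continuous_eval p).measurable.comp E.symm.measurable (measurableSet_singleton 0).compl
  rw [← hE.map_eq, E.symm.measurableEmbedding.ae_map_iff]
  exact (ae_prod_iff_ae_ae hmeas).2 hslice

theorem ae_eval_ne_zero {σ : Type*} [Fintype σ] {p : MvPolynomial σ ℝ} (hp : p ≠ 0) :
    ∀ᵐ x : σ → ℝ, eval x p ≠ 0 := by
  suffices ∀ (σ : Type _) [Finite σ] [Fintype σ] (p : MvPolynomial σ ℝ), p ≠ 0 →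
      ∀ᵐ x : σ → ℝ, eval x p ≠ 0 from this σ p hp
  intro σ _
  induction σ using Finite.induction_empty_option with
  | @of_equiv α β e ih =>
    intro _ p hp
    have := Fintype.ofEquiv β e.symm
    exact ae_eval_ne_zero_of_equiv e ih hp
  | h_empty =>
    intro _ p hp
    refine ae_of_all _ fun x => ?_
    rw [eq_C_of_isEmpty p, eval_C]
    exact fun h0 => hp (by rw [eq_C_of_isEmpty p, h0, map_zero])
  | @h_option σ _ ih =>
    intro hfin p hp
    obtain rfl : hfin = instFintypeOption := Subsingleton.elim _ _
    exact ae_eval_ne_zero_option ih hp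

end MvPolynomial

theorem MeasureTheory.volume_measurePreserving_curry (ι κ X : Type*) [Fintype ι] [Fintype κ]
    [MeasureSpace X] [SigmaFinite (volume : Measure X)] :
    MeasurePreserving (MeasurableEquiv.curry ι κ X) volume volume := by
  refine ⟨(MeasurableEquiv.curry ι κ X).measurable,
    (pi_eq_generateFrom (fun _ => generateFrom_pi) (fun _ => isPiSystem_pi)
      (fun _ => FiniteSpanningSetsIn.pi fun _ => volume.toFiniteSpanningSetsIn) ?_).symm⟩
  intro s hs
  choose t _ hts using hs
  have : MeasurableEquiv.curry ι κ X ⁻¹' univ.pi s = univ.pi fun p : ι × κ => t p.1 p.2 := by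
    ext x
    simp [← hts, Set.mem_pi]
  rw [MeasurableEquiv.map_apply, this, volume_pi_pi, Fintype.prod_prod_type]
  refine Finset.prod_congr rfl fun i _ => ?_
  rw [← hts i, pi_pi]

theorem Matrix.card_le_rank_of_det_submatrix_ne_zero {m n k R : Type*} [Fintype n] [Fintype k]
    [DecidableEq k] [CommRing R] [IsDomain R] (A : Matrix m n R) (r : k → m) (c : k → n)
    (h : (A.submatrix r c).det ≠ 0) : Fintype.card k ≤ A.rank :=
  (rank_of_det_ne_zero h).symm.le.trans (rank_submatrix_le A r c)

theorem Matrix.ae_card_le_rank_map_eval {σ m n k : Type*} [Fintype σ] [Fintype n] [Fintype k]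
    [DecidableEq k] (M : Matrix m n (MvPolynomial σ ℝ)) (r : k → m) (c : k → n) (x₀ : σ → ℝ)
    (h : ((M.map (eval x₀)).submatrix r c).det ≠ 0) :
    ∀ᵐ x : σ → ℝ, Fintype.card k ≤ (M.map (eval x)).rank := by
  have heval : ∀ x, eval x (M.submatrix r c).det = ((M.map (eval x)).submatrix r c).det :=
    fun x => by rw [RingHom.map_det]; rfl
  have hP : (M.submatrix r c).det ≠ 0 := fun h0 => h (by rw [← heval, h0, map_zero])
  filter_upwards [MvPolynomial.ae_eval_ne_zero hP] with x hx
  exact card_le_rank_of_det_submatrix_ne_zero _ r c (heval x ▸ hx)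

section GenericKhatriRao

variable (α β γ κ : Type*)

def matrixTripleCoords :
    ((α × κ) ⊕ (β × κ) ⊕ (γ × κ) → ℝ) ≃ᵐ (α → κ → ℝ) × (β → κ → ℝ) × (γ → κ → ℝ) :=
  (MeasurableEquiv.sumPiEquivProdPi _).trans <| (MeasurableEquiv.curry α κ ℝ).prodCongr <|
    (MeasurableEquiv.sumPiEquivProdPi _).trans <|
      (MeasurableEquiv.curry β κ ℝ).prodCongr (MeasurableEquiv.curry γ κ ℝ)

theorem measurePreserving_matrixTripleCoords [Fintype α] [Fintype β] [Fintype γ] [Fintype κ] :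
    MeasurePreserving (matrixTripleCoords α β γ κ) volume volume :=
  ((volume_measurePreserving_curry α κ ℝ).prod <|
    ((volume_measurePreserving_curry β κ ℝ).prod (volume_measurePreserving_curry γ κ ℝ)).comp
      (volume_measurePreserving_sumPiEquivProdPi _)).comp
    (volume_measurePreserving_sumPiEquivProdPi _)

noncomputable def genericKhatriRao :
    Matrix (γ × β × α) κ (MvPolynomial ((α × κ) ⊕ (β × κ) ⊕ (γ × κ)) ℝ) :=
  Matrix.of fun p r =>
    X (.inr (.inr (p.1, r))) * (X (.inr (.inl (p.2.1, r))) * X (.inl (p.2.2, r)))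

theorem genericKhatriRao_map_eval (x : (α × κ) ⊕ (β × κ) ⊕ (γ × κ) → ℝ) :
    (genericKhatriRao α β γ κ).map (eval x) =
      khatriRao (Matrix.of (matrixTripleCoords α β γ κ x).2.2)
        (khatriRao (Matrix.of (matrixTripleCoords α β γ κ x).2.1)
          (Matrix.of (matrixTripleCoords α β γ κ x).1)) := by
  ext p r
  simp only [genericKhatriRao, khatriRao, Matrix.map_apply, Matrix.of_apply, map_mul, eval_X]
  rfl

end GenericKhatriRao

def khatriRaoRowEquiv (I J K : ℕ) : Fin K × Fin J × Fin I ≃ Fin (K * (J * I)) :=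
  ((Equiv.refl _).prodCongr finProdFinEquiv).trans finProdFinEquiv

theorem khatriRao_pow_apply (I J K R : ℕ) (v : Fin R → ℝ) (p : Fin K × Fin J × Fin I)
    (r : Fin R) :
    khatriRao (Matrix.of fun (k : Fin K) r => v r ^ (J * I * k))
      (khatriRao (Matrix.of fun (j : Fin J) r => v r ^ (I * j))
        (Matrix.of fun (i : Fin I) r => v r ^ (i : ℕ))) p r =
      v r ^ (khatriRaoRowEquiv I J K p : ℕ) := by
  simp only [khatriRao, khatriRaoRowEquiv, Matrix.of_apply, Equiv.trans_apply,
    Equiv.prodCongr_apply, Equiv.coe_refl, Prod.map, id, finProdFinEquiv_apply_val]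
  ring

theorem det_submatrix_khatriRao_pow_ne_zero (I J K R m : ℕ) (hrows : m ≤ K * (J * I))
    (hcols : m ≤ R) :
    ((khatriRao (Matrix.of fun (k : Fin K) (r : Fin R) => (r : ℝ) ^ (J * I * k))
      (khatriRao (Matrix.of fun (j : Fin J) (r : Fin R) => (r : ℝ) ^ (I * j))
        (Matrix.of fun (i : Fin I) (r : Fin R) => (r : ℝ) ^ (i : ℕ)))).submatrix
      ((khatriRaoRowEquiv I J K).symm ∘ Fin.castLE hrows) (Fin.castLE hcols)).det ≠ 0 := by
  have hV : (Matrix.vandermonde fun b : Fin m => (b : ℝ)).transpose.det ≠ 0 := by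
    rw [Matrix.det_transpose, Matrix.det_vandermonde_ne_zero_iff]
    exact fun a b h => Fin.val_injective (Nat.cast_injective h)
  convert hV using 2
  ext a b
  simp only [Matrix.submatrix_apply, Function.comp_apply, khatriRao_pow_apply,
    Equiv.apply_symm_apply, Fin.val_castLE, Matrix.transpose_apply, Matrix.vandermonde_apply]

theorem khatriRao_three_generic_rank_general (I J K R : ℕ) :
    MeasureTheory.volume
      {t : (Fin I → Fin R → ℝ) × (Fin J → Fin R → ℝ) × (Fin K → Fin R → ℝ) |
        (khatriRao (Matrix.of t.2.2) (khatriRao (Matrix.of t.2.1) (Matrix.of t.1))).rank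
          ≠ min (I * J * K) R} = 0 := by
  set m := min (I * J * K) R
  have hrows : m ≤ K * (J * I) := (min_le_left _ _).trans_eq (by ring)
  have hcols : m ≤ R := min_le_right _ _
  let t₀ : (Fin I → Fin R → ℝ) × (Fin J → Fin R → ℝ) × (Fin K → Fin R → ℝ) :=
    (fun i r => (r : ℝ) ^ (i : ℕ), fun j r => (r : ℝ) ^ (I * j), fun k r => (r : ℝ) ^ (J * I * k))
  have hgeneric := Matrix.ae_card_le_rank_map_eval (genericKhatriRao _ _ _ _)
    ((khatriRaoRowEquiv I J K).symm ∘ Fin.castLE hrows) (Fin.castLE hcols)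
    ((matrixTripleCoords _ _ _ _).symm t₀) (by
      rw [genericKhatriRao_map_eval, MeasurableEquiv.apply_symm_apply]
      exact det_submatrix_khatriRao_pow_ne_zero I J K R m hrows hcols)
  refine ae_iff.1 ?_
  rw [← (measurePreserving_matrixTripleCoords _ _ _ _).map_eq,
    (matrixTripleCoords _ _ _ _).measurableEmbedding.ae_map_iff]
  filter_upwards [hgeneric] with x hx
  rw [genericKhatriRao_map_eval, Fintype.card_fin] at hx
  refine le_antisymm (le_min ((Matrix.rank_le_card_height _).trans_eq ?_)
    ((Matrix.rank_le_card_width _).trans_eq (Fintype.card_fin R))) hx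
  simp only [Fintype.card_prod, Fintype.card_fin]
  ring

/-- For generic `X ∈ ℝ^{I×R}`, `Y ∈ ℝ^{J×R}`, `Z ∈ ℝ^{K×R}`, the iterated
Khatri–Rao product `Z ⊙ (Y ⊙ X)` has rank `min (I*J*K) R`: the set of triples
`(X, Y, Z)` where this fails has Lebesgue measure zero. -/
theorem khatriRao_three_generic_rank (I J K R : ℕ)
    (hI : 0 < I) (hJ : 0 < J) (hK : 0 < K) (hR : 0 < R) :
    MeasureTheory.volume
      {t : (Fin I → Fin R → ℝ) × (Fin J → Fin R → ℝ) × (Fin K → Fin R → ℝ) |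
        (khatriRao (Matrix.of t.2.2) (khatriRao (Matrix.of t.2.1) (Matrix.of t.1))).rank
          ≠ min (I * J * K) R} = 0 :=
  khatriRao_three_generic_rank_general I J K R
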